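/- The weighted Myerson value satisfies Component Balance: for every component additive value function v, network g, positive weight vector w, and every component h of g, Σ_{i ∈ N(h)} Y_i^{w-MV}(g,v) = v(h). -/

import Mathlib

open Finset

variable {n : ℕ}

/-- A network on player set `Fin n`: a finite set of (unordered) links. -/
abbrev Network (n : ℕ) := Finset (Sym2 (Fin n))

/-- The set of non-isolated players of a network. -/
def players (g : Network n) : Finset (Fin n) :=
  Finset.univ.filter (fun i => ∃ e ∈ g, i ∈ e)

/-- Harsanyi dividend of a value function at a network. -/
noncomputable def dividend (v : Network n → ℝ) (g' : Network n) : ℝ :=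
  ∑ g'' ∈ g'.powerset, (-1 : ℝ) ^ (g'.card - g''.card) * v g''

/-- The weighted Myerson value. -/
noncomputable def wMV (w : Fin n → ℝ) (v : Network n → ℝ) (g : Network n) (i : Fin n) : ℝ :=
  ∑ g' ∈ g.powerset.filter (fun g' => i ∈ players g'),
    (w i / ∑ j ∈ players g', w j) * dividend v g'

/-- Connectivity of two players through links of `g`. -/
def connectedIn (g : Network n) (i j : Fin n) : Prop :=
  Relation.ReflTransGen (fun a b => s(a, b) ∈ g) i j

open Classical in
/-- The component of `g` containing the link `e`. -/
noncomputable def component (g : Network n) (e : Sym2 (Fin n)) : Network n :=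
  g.filter (fun e' => ∃ i ∈ e, ∃ j ∈ e', connectedIn g i j)

/-- The set of components (maximal connected subnetworks) of `g`. -/
noncomputable def components (g : Network n) : Finset (Network n) :=
  g.image (component g)

/-- Component additive value functions. -/
def componentAdditive (v : Network n → ℝ) : Prop :=
  ∀ g : Network n, v g = ∑ h ∈ components g, v h

open Classical in
/-- The restriction `g|_S` of a network to a coalition `S`. -/
noncomputable def restrict (g : Network n) (S : Finset (Fin n)) : Network n :=
  g.filter (fun e => ∀ i ∈ e, i ∈ S)

/-- The set `g_i` of links of player `i` in `g`. -/
def glinks (g : Network n) (i : Fin n) : Network n :=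
  g.filter (fun e => i ∈ e)

-- ### aux lemmas

lemma mem_players_iff {g : Network n} {i : Fin n} : i ∈ players g ↔ ∃ e ∈ g, i ∈ e := by
  simp [players]

lemma players_mono {a b : Network n} (h : a ⊆ b) : players a ⊆ players b := by
  intro i hi
  rw [mem_players_iff] at *
  obtain ⟨e, he, hie⟩ := hi
  exact ⟨e, h he, hie⟩

lemma connectedIn_mono {a b : Network n} (h : a ⊆ b) {i j : Fin n}
    (hc : connectedIn a i j) : connectedIn b i j :=
  Relation.ReflTransGen.mono (fun _ _ hxy => h hxy) _ _ hc

lemma connectedIn_symm {g : Network n} {i j : Fin n} (hc : connectedIn g i j) :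
    connectedIn g j i := by
  refine @Std.Symm.symm _ _ (@Relation.ReflTransGen.symmetric _ _ ⟨?_⟩) _ _ hc
  intro x y hxy
  rwa [Sym2.eq_swap]

lemma edge_connectedIn {g : Network n} {e : Sym2 (Fin n)} (he : e ∈ g) {i j : Fin n}
    (hi : i ∈ e) (hj : j ∈ e) : connectedIn g i j := by
  by_cases hij : i = j
  · exact hij ▸ Relation.ReflTransGen.refl
  · have : e = s(i, j) := (Sym2.mem_and_mem_iff hij).mp ⟨hi, hj⟩
    exact Relation.ReflTransGen.single (this ▸ he)

lemma component_subset {g : Network n} {e : Sym2 (Fin n)} : component g e ⊆ g := by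
  intro x hx
  simp only [component, Finset.mem_filter] at hx
  exact hx.1

lemma self_mem_component {g : Network n} {e : Sym2 (Fin n)} (he : e ∈ g) :
    e ∈ component g e := by
  simp only [component, Finset.mem_filter]
  exact ⟨he, e.out.1, Sym2.out_fst_mem e, e.out.1, Sym2.out_fst_mem e,
    Relation.ReflTransGen.refl⟩

lemma disjoint_of_players_disjoint {a b : Network n}
    (hd : Disjoint (players a) (players b)) : Disjoint a b := by
  rw [Finset.disjoint_left]
  intro e hea heb
  exact Finset.disjoint_left.mp hd (mem_players_iff.mpr ⟨e, hea, Sym2.out_fst_mem e⟩)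
    (mem_players_iff.mpr ⟨e, heb, Sym2.out_fst_mem e⟩)

lemma connectedIn_union_left {a b : Network n} (hd : Disjoint (players a) (players b))
    {i j : Fin n} (hi : i ∈ players a) (hc : connectedIn (a ∪ b) i j) :
    connectedIn a i j ∧ j ∈ players a := by
  induction hc with
  | refl => exact ⟨Relation.ReflTransGen.refl, hi⟩
  | @tail m j' hab hstep ih =>
      rcases Finset.mem_union.mp hstep with h1 | h1
      · exact ⟨ih.1.tail h1, mem_players_iff.mpr ⟨_, h1, Sym2.mem_mk_right m j'⟩⟩
      · exact absurd (mem_players_iff.mpr ⟨_, h1, Sym2.mem_mk_left m j'⟩)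
          (Finset.disjoint_left.mp hd ih.2)

lemma component_union_left {a b : Network n} (hd : Disjoint (players a) (players b))
    {e : Sym2 (Fin n)} (he : e ∈ a) : component (a ∪ b) e = component a e := by
  ext e'
  simp only [component, Finset.mem_filter, Finset.mem_union]
  constructor
  · rintro ⟨he', i, hie, j, hje', hconn⟩
    have hia : i ∈ players a := mem_players_iff.mpr ⟨e, he, hie⟩
    obtain ⟨hconn', hja⟩ := connectedIn_union_left hd hia hconn
    refine ⟨?_, i, hie, j, hje', hconn'⟩
    rcases he' with h1 | h1
    · exact h1
    · exact absurd (mem_players_iff.mpr ⟨e', h1, hje'⟩)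
        (Finset.disjoint_left.mp hd hja)
  · rintro ⟨he', i, hie, j, hje', hconn⟩
    exact ⟨Or.inl he', i, hie, j, hje',
      connectedIn_mono Finset.subset_union_left hconn⟩

lemma components_union {a b : Network n} (hd : Disjoint (players a) (players b)) :
    components (a ∪ b) = components a ∪ components b := by
  unfold components
  rw [Finset.image_union]
  congr 1
  · exact Finset.image_congr (fun e he => component_union_left hd he)
  · refine Finset.image_congr (fun e he => ?_)
    rw [Finset.union_comm a b]
    exact component_union_left hd.symm he

lemma disjoint_components {a b : Network n} (hd : Disjoint (players a) (players b)) :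
    Disjoint (components a) (components b) := by
  rw [Finset.disjoint_left]
  intro c hca hcb
  simp only [components, Finset.mem_image] at hca hcb
  obtain ⟨e, he, rfl⟩ := hca
  obtain ⟨e', he', hc⟩ := hcb
  have h1 : e ∈ component a e := self_mem_component he
  have h2 : e ∈ b := component_subset (hc.symm ▸ h1)
  exact Finset.disjoint_left.mp hd
    (mem_players_iff.mpr ⟨e, he, Sym2.out_fst_mem e⟩)
    (mem_players_iff.mpr ⟨e, h2, Sym2.out_fst_mem e⟩)

lemma v_empty {v : Network n → ℝ} (hv : componentAdditive v) : v (∅ : Network n) = 0 := by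
  have := hv ∅
  simpa [components] using this

lemma v_union {v : Network n → ℝ} (hv : componentAdditive v) {a b : Network n}
    (hd : Disjoint (players a) (players b)) : v (a ∪ b) = v a + v b := by
  rw [hv (a ∪ b), components_union hd, Finset.sum_union (disjoint_components hd),
    ← hv a, ← hv b]

lemma alt_sum_zero {b : Network n} (hb : b.Nonempty) :
    ∑ t ∈ b.powerset, (-1 : ℝ) ^ (b.card - t.card) = 0 := by
  have h0 : (∑ t ∈ b.powerset, (-1 : ℤ) ^ t.card) = 0 :=
    Finset.sum_powerset_neg_one_pow_card_of_nonempty hb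
  have : ∑ t ∈ b.powerset, (-1 : ℝ) ^ (b.card - t.card)
      = (-1 : ℝ) ^ b.card * ∑ t ∈ b.powerset, (-1 : ℝ) ^ t.card := by
    rw [Finset.mul_sum]
    refine Finset.sum_congr rfl (fun t ht => ?_)
    have hle : t.card ≤ b.card := Finset.card_le_card (Finset.mem_powerset.mp ht)
    rw [← pow_add, show b.card + t.card = (b.card - t.card) + 2 * t.card by omega,
      pow_add, pow_mul]
    simp
  rw [this]
  have : (∑ t ∈ b.powerset, (-1 : ℝ) ^ t.card) = 0 := by
    have := congrArg (fun z : ℤ => (z : ℝ)) h0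
    push_cast at this
    simpa using this
  rw [this, mul_zero]

lemma dividend_union_eq_zero {v : Network n → ℝ} (hv : componentAdditive v)
    {a b : Network n} (hd : Disjoint (players a) (players b))
    (ha : a.Nonempty) (hb : b.Nonempty) : dividend v (a ∪ b) = 0 := by
  classical
  have hab : Disjoint a b := disjoint_of_players_disjoint hd
  have hcab : ∀ c ∈ (a ∪ b).powerset, c ∩ a ∪ c ∩ b = c := by
    intro c hc
    rw [Finset.mem_powerset] at hc
    rw [← Finset.inter_union_distrib_left, Finset.inter_eq_left.mpr hc]
  have key : dividend v (a ∪ b)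
      = ∑ p ∈ a.powerset ×ˢ b.powerset,
          (-1 : ℝ) ^ ((a ∪ b).card - (p.1 ∪ p.2).card) * v (p.1 ∪ p.2) := by
    rw [dividend]
    refine Finset.sum_nbij' (fun c => (c ∩ a, c ∩ b)) (fun p => p.1 ∪ p.2) ?_ ?_ ?_ ?_ ?_
    · intro c _
      simp only [Finset.mem_product, Finset.mem_powerset]
      exact ⟨Finset.inter_subset_right, Finset.inter_subset_right⟩
    · intro p hp
      simp only [Finset.mem_product, Finset.mem_powerset] at hp
      exact Finset.mem_powerset.mpr (Finset.union_subset_union hp.1 hp.2)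
    · exact hcab
    · intro p hp
      simp only [Finset.mem_product, Finset.mem_powerset] at hp
      have h1 : (p.1 ∪ p.2) ∩ a = p.1 := by
        rw [Finset.union_inter_distrib_right, Finset.inter_eq_left.mpr hp.1,
          Finset.disjoint_iff_inter_eq_empty.mp (hab.symm.mono_left hp.2),
          Finset.union_empty]
      have h2 : (p.1 ∪ p.2) ∩ b = p.2 := by
        rw [Finset.union_inter_distrib_right, Finset.inter_eq_left.mpr hp.2,
          Finset.disjoint_iff_inter_eq_empty.mp (hab.mono_left hp.1), Finset.empty_union]
      simp [h1, h2]
    · intro c hc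
      rw [hcab c hc]
  rw [key, Finset.sum_product]
  have step1 : ∀ s ∈ a.powerset, ∀ t ∈ b.powerset,
      (-1 : ℝ) ^ ((a ∪ b).card - (s ∪ t).card) * v (s ∪ t)
      = (-1 : ℝ) ^ (a.card - s.card) *
          ((-1 : ℝ) ^ (b.card - t.card) * (v s + v t)) := by
    intro s hs t ht
    rw [Finset.mem_powerset] at hs ht
    have hst : Disjoint s t := hab.mono hs ht
    have hvst : v (s ∪ t) = v s + v t :=
      v_union hv (hd.mono (players_mono hs) (players_mono ht))
    have hles := Finset.card_le_card hs
    have hlet := Finset.card_le_card ht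
    rw [hvst, Finset.card_union_of_disjoint hab, Finset.card_union_of_disjoint hst,
      show a.card + b.card - (s.card + t.card)
        = (a.card - s.card) + (b.card - t.card) by omega, pow_add, mul_assoc]
  rw [Finset.sum_congr rfl (fun s hs => Finset.sum_congr rfl (fun t ht => step1 s hs t ht))]
  have inner : ∀ s : Network n,
      ∑ t ∈ b.powerset, (-1 : ℝ) ^ (b.card - t.card) * (v s + v t)
      = ∑ t ∈ b.powerset, (-1 : ℝ) ^ (b.card - t.card) * v t := by
    intro s
    simp only [mul_add]
    rw [Finset.sum_add_distrib, ← Finset.sum_mul, alt_sum_zero hb, zero_mul, zero_add]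
  calc ∑ s ∈ a.powerset, ∑ t ∈ b.powerset,
        (-1 : ℝ) ^ (a.card - s.card) * ((-1 : ℝ) ^ (b.card - t.card) * (v s + v t))
      = ∑ s ∈ a.powerset, (-1 : ℝ) ^ (a.card - s.card) *
          ∑ t ∈ b.powerset, (-1 : ℝ) ^ (b.card - t.card) * (v s + v t) := by
        refine Finset.sum_congr rfl fun s _ => ?_
        rw [Finset.mul_sum]
    _ = ∑ s ∈ a.powerset, (-1 : ℝ) ^ (a.card - s.card) *
          ∑ t ∈ b.powerset, (-1 : ℝ) ^ (b.card - t.card) * v t := by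
        refine Finset.sum_congr rfl fun s _ => ?_
        rw [inner s]
    _ = (∑ s ∈ a.powerset, (-1 : ℝ) ^ (a.card - s.card)) *
          ∑ t ∈ b.powerset, (-1 : ℝ) ^ (b.card - t.card) * v t := by
        rw [Finset.sum_mul]
    _ = 0 := by rw [alt_sum_zero ha, zero_mul]

lemma pow_card_sum_real {α : Type*} [DecidableEq α] (x : Finset α) :
    ∑ m ∈ x.powerset, (-1 : ℝ) ^ m.card = if x = ∅ then 1 else 0 := by
  have h0 := Finset.sum_powerset_neg_one_pow_card (x := x)
  have := congrArg (fun z : ℤ => (z : ℝ)) h0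
  push_cast at this
  split_ifs with hx <;> simp [hx] at this ⊢ <;> exact this

lemma sum_sandwich {s u : Network n} (hu : u ⊆ s) :
    ∑ t ∈ s.powerset.filter (fun t => u ⊆ t), (-1 : ℝ) ^ (t.card - u.card)
      = if u = s then 1 else 0 := by
  classical
  have key : ∑ t ∈ s.powerset.filter (fun t => u ⊆ t), (-1 : ℝ) ^ (t.card - u.card)
      = ∑ r ∈ (s \ u).powerset, (-1 : ℝ) ^ r.card := by
    refine Finset.sum_nbij' (fun t => t \ u) (fun r => r ∪ u) ?_ ?_ ?_ ?_ ?_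
    · intro t ht
      simp only [Finset.mem_filter, Finset.mem_powerset] at ht ⊢
      exact Finset.sdiff_subset_sdiff ht.1 (le_refl u)
    · intro r hr
      simp only [Finset.mem_filter, Finset.mem_powerset] at hr ⊢
      constructor
      · exact Finset.union_subset (hr.trans (Finset.sdiff_subset)) hu
      · exact Finset.subset_union_right
    · intro t ht
      simp only [Finset.mem_filter, Finset.mem_powerset] at ht
      exact Finset.sdiff_union_of_subset ht.2
    · intro r hr
      simp only [Finset.mem_powerset] at hr
      have hdru : Disjoint r u := Finset.sdiff_disjoint.mono_left hr
      show (r ∪ u) \ u = r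
      rw [Finset.union_sdiff_distrib, Finset.sdiff_self, Finset.union_empty,
        Finset.sdiff_eq_self_iff_disjoint.mpr hdru]
    · intro t ht
      simp only [Finset.mem_filter, Finset.mem_powerset] at ht
      rw [Finset.card_sdiff_of_subset ht.2]
  rw [key, pow_card_sum_real]
  congr 1
  simp only [Finset.sdiff_eq_empty_iff_subset, eq_iff_iff]
  exact ⟨fun h2 => le_antisymm hu h2, fun h2 => h2 ▸ le_refl _⟩

lemma sum_dividend {v : Network n → ℝ} (s : Network n) :
    ∑ t ∈ s.powerset, dividend v t = v s := by
  classical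
  have h1 : ∀ t ∈ s.powerset, dividend v t
      = ∑ u ∈ s.powerset, if u ⊆ t then (-1 : ℝ) ^ (t.card - u.card) * v u else 0 := by
    intro t ht
    rw [Finset.mem_powerset] at ht
    rw [dividend, ← Finset.sum_filter]
    refine Finset.sum_congr ?_ (fun _ _ => rfl)
    ext u
    simp only [Finset.mem_powerset, Finset.mem_filter]
    exact ⟨fun h => ⟨h.trans ht, h⟩, fun h => h.2⟩
  rw [Finset.sum_congr rfl h1, Finset.sum_comm]
  have h2 : ∀ u ∈ s.powerset,
      (∑ t ∈ s.powerset, if u ⊆ t then (-1 : ℝ) ^ (t.card - u.card) * v u else 0)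
      = (if u = s then 1 else 0) * v u := by
    intro u hu
    rw [Finset.mem_powerset] at hu
    rw [← Finset.sum_filter, ← Finset.sum_mul]
    congr 1
    exact sum_sandwich hu
  rw [Finset.sum_congr rfl h2]
  have : ∀ u ∈ s.powerset, (if u = s then 1 else 0) * v u
      = if u = s then v u else 0 := by
    intro u _
    split_ifs <;> simp
  rw [Finset.sum_congr rfl this, Finset.sum_ite_eq' s.powerset s v,
    if_pos (Finset.mem_powerset.mpr (le_refl s))]

lemma dividend_empty {v : Network n → ℝ} (hv : componentAdditive v) :
    dividend v (∅ : Network n) = 0 := by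
  simp [dividend, v_empty hv]

lemma dividend_ne_zero_connected {v : Network n → ℝ} (hv : componentAdditive v)
    {g' : Network n} (hne : dividend v g' ≠ 0) :
    g'.Nonempty ∧ ∀ i ∈ players g', ∀ j ∈ players g', connectedIn g' i j := by
  classical
  rcases Finset.eq_empty_or_nonempty g' with rfl | hne'
  · exact absurd (dividend_empty hv) hne
  refine ⟨hne', ?_⟩
  have hcomp : ∀ e ∈ g', g' \ component g' e = ∅ := by
    intro e he
    by_contra hbne
    rw [← Ne, ← Finset.nonempty_iff_ne_empty] at hbne
    have hsub : component g' e ⊆ g' := component_subset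
    have hunion : component g' e ∪ (g' \ component g' e) = g' :=
      Finset.union_sdiff_of_subset hsub
    have hdp : Disjoint (players (component g' e)) (players (g' \ component g' e)) := by
      rw [Finset.disjoint_left]
      intro i hiA hiB
      rw [mem_players_iff] at hiA hiB
      obtain ⟨ea, hea, hia⟩ := hiA
      obtain ⟨eb, heb, hib⟩ := hiB
      have heag : ea ∈ g' := hsub hea
      have h3 := hea
      simp only [component, Finset.mem_filter] at h3
      obtain ⟨_, x, hx, y, hy, hxy⟩ := h3
      have hxi : connectedIn g' x i := hxy.trans (edge_connectedIn heag hy hia)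
      have : eb ∈ component g' e := by
        simp only [component, Finset.mem_filter]
        exact ⟨(Finset.mem_sdiff.mp heb).1, x, hx, i, hib, hxi⟩
      exact (Finset.mem_sdiff.mp heb).2 this
    have h0 := dividend_union_eq_zero hv hdp ⟨e, self_mem_component he⟩ hbne
    rw [hunion] at h0
    exact hne h0
  intro i hi j hj
  rw [mem_players_iff] at hi hj
  obtain ⟨e1, he1, hie⟩ := hi
  obtain ⟨e2, he2, hje⟩ := hj
  have h2 : e2 ∈ component g' e1 := by
    have := hcomp e1 he1
    rw [Finset.sdiff_eq_empty_iff_subset] at this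
    exact this he2
  simp only [component, Finset.mem_filter] at h2
  obtain ⟨_, x, hx, y, hy, hxy⟩ := h2
  exact ((edge_connectedIn he1 hie hx).trans hxy).trans (edge_connectedIn he2 hy hje)

/-- The weighted Myerson value is component balanced. -/
theorem wMV_componentBalanced (w : Fin n → ℝ) (hw : ∀ i, 0 < w i)
    (v : Network n → ℝ) (hv : componentAdditive v) (g : Network n)
    (h : Network n) (hh : h ∈ components g) :
    ∑ i ∈ players h, wMV w v g i = v h := by
  classical
  obtain ⟨e0, he0, hhe⟩ : ∃ e0 ∈ g, component g e0 = h := by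
    simpa [components] using hh
  have hsubg : h ⊆ g := hhe ▸ component_subset
  have hswap : ∑ i ∈ players h, wMV w v g i
      = ∑ g' ∈ g.powerset, ∑ i ∈ players h,
          (if i ∈ players g' then (w i / ∑ j ∈ players g', w j) * dividend v g'
           else 0) := by
    unfold wMV
    rw [Finset.sum_congr rfl (fun i _ => Finset.sum_filter
      (fun g' => i ∈ players g')
      (fun g' => (w i / ∑ j ∈ players g', w j) * dividend v g')), Finset.sum_comm]
  have hterm : ∀ g' ∈ g.powerset,
      (∑ i ∈ players h,
        if i ∈ players g' then (w i / ∑ j ∈ players g', w j) * dividend v g' else 0)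
      = if g' ⊆ h then dividend v g' else 0 := by
    intro g' hg'
    rw [Finset.mem_powerset] at hg'
    by_cases hz : dividend v g' = 0
    · rw [hz]
      simp
    · obtain ⟨hne, hconn⟩ := dividend_ne_zero_connected hv hz
      by_cases hsub : g' ⊆ h
      · rw [if_pos hsub, ← Finset.sum_filter]
        have hpl : (players h).filter (fun i => i ∈ players g') = players g' := by
          ext i
          simp only [Finset.mem_filter]
          exact ⟨fun hx => hx.2, fun hi => ⟨players_mono hsub hi, hi⟩⟩
        rw [hpl, ← Finset.sum_mul, ← Finset.sum_div]
        have hplne : (players g').Nonempty := by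
          obtain ⟨e, he⟩ := hne
          exact ⟨e.out.1, mem_players_iff.mpr ⟨e, he, Sym2.out_fst_mem e⟩⟩
        have hpos : 0 < ∑ j ∈ players g', w j :=
          Finset.sum_pos (fun j _ => hw j) hplne
        rw [div_self (ne_of_gt hpos), one_mul]
      · rw [if_neg hsub]
        have hdisj : ∀ i ∈ players h, i ∉ players g' := by
          intro i hih hig
          apply hsub
          intro e' he'
          rw [mem_players_iff] at hih
          obtain ⟨e1, he1, hie1⟩ := hih
          have he1' : e1 ∈ component g e0 := hhe.symm ▸ he1
          simp only [component, Finset.mem_filter] at he1'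
          obtain ⟨he1g, x, hx, y, hy, hxy⟩ := he1'
          have hxi : connectedIn g x i := hxy.trans (edge_connectedIn he1g hy hie1)
          have hj : e'.out.1 ∈ players g' :=
            mem_players_iff.mpr ⟨e', he', Sym2.out_fst_mem e'⟩
          have hij : connectedIn g i e'.out.1 :=
            connectedIn_mono hg' (hconn i hig e'.out.1 hj)
          have : e' ∈ component g e0 := by
            simp only [component, Finset.mem_filter]
            exact ⟨hg' he', x, hx, e'.out.1, Sym2.out_fst_mem e', hxi.trans hij⟩
          exact hhe ▸ this
        exact Finset.sum_eq_zero fun i hi => if_neg (hdisj i hi)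
  rw [hswap, Finset.sum_congr rfl hterm, ← Finset.sum_filter]
  have hps : g.powerset.filter (fun t => t ⊆ h) = h.powerset := by
    ext t
    simp only [Finset.mem_filter, Finset.mem_powerset]
    exact ⟨fun hx => hx.2, fun hx => ⟨hx.trans hsubg, hx⟩⟩
  rw [hps, sum_dividend]
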